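/- arXiv:2408.00748 — 3 statements merged into one kernel-verified Lean document; each statement's English description precedes it below -/
import Mathlib

section
/- The map Φ_{p,q}(r e^{iθ}) = (r^{√(pq)}/√(p+q)) (√q e^{ipθ}, i√p e^{-iqθ}) from the closed unit disc to ℂ² is weakly conformal: in polar coordinates, |∂_r Φ_{p,q}|² = |(1/r) ∂_θ Φ_{p,q}|² and ⟨∂_r Φ_{p,q}, (1/r) ∂_θ Φ_{p,q}⟩ = 0 for all r > 0 and θ. -/
/-!
`Φ = Φ_{p,q}` is homogeneous of degree `a = √(pq)` in `r` and equivariant for the circle action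
with weights `(p, -q)`, so `∂_r Φ = (a/r) Φ` and `∂_θ Φ = J Φ` with `J = diag(ip, -iq)`. As `J` is
skew, `⟨Φ, JΦ⟩ = 0`, which is the orthogonality. Equal lengths reduce to
`a² (|Φ₁|² + |Φ₂|²) = p² |Φ₁|² + q² |Φ₂|²`, which holds because `a² = pq` and the amplitudes are
balanced: `p |Φ₁|² = q |Φ₂|²`.
-/

/-- The Schoen–Wolfson cone parametrization `Φ_{p,q}` in polar coordinates. -/
noncomputable def SWPhi (p q : ℕ) (r θ : ℝ) : ℂ × ℂ :=
  ( ((r ^ Real.sqrt ((p : ℝ) * q) / Real.sqrt ((p : ℝ) + q) * Real.sqrt q : ℝ) : ℂ) *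
      Complex.exp (Complex.I * p * θ),
    ((r ^ Real.sqrt ((p : ℝ) * q) / Real.sqrt ((p : ℝ) + q) * Real.sqrt p : ℝ) : ℂ) *
      Complex.I * Complex.exp (-(Complex.I * q * θ)) )

/-- The real (Euclidean) inner product on `ℂ² ≅ ℝ⁴`. -/
noncomputable def rinner (u v : ℂ × ℂ) : ℝ :=
  (u.1 * (starRingEnd ℂ) v.1).re + (u.2 * (starRingEnd ℂ) v.2).re

open Complex

/-- Infinitesimal generator of the torus action `t ↦ (e^{imt} z₁, e^{int} z₂)`. -/
def rotGen (m n : ℝ) (u : ℂ × ℂ) : ℂ × ℂ :=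
  (I * m * u.1, I * n * u.2)

lemma rinner_self (u : ℂ × ℂ) : rinner u u = ‖u.1‖ ^ 2 + ‖u.2‖ ^ 2 := by
  simp only [rinner, mul_conj, ofReal_re, normSq_eq_norm_sq]

lemma rinner_smul_left (c : ℝ) (u v : ℂ × ℂ) : rinner (c • u) v = c * rinner u v := by
  simp only [rinner, Prod.smul_fst, Prod.smul_snd, real_smul, mul_assoc, re_ofReal_mul, mul_add]

lemma rinner_smul_right (c : ℝ) (u v : ℂ × ℂ) : rinner u (c • v) = c * rinner u v := by
  simp only [rinner, Prod.smul_fst, Prod.smul_snd, real_smul, map_mul, conj_ofReal,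
    mul_left_comm _ (c : ℂ), re_ofReal_mul, mul_add]

lemma rinner_rotGen_right_self (m n : ℝ) (u : ℂ × ℂ) : rinner u (rotGen m n u) = 0 := by
  simp only [rinner, rotGen, map_mul, conj_I, conj_ofReal, mul_re, mul_im, neg_re, neg_im, I_re,
    I_im, ofReal_re, ofReal_im, conj_re, conj_im]
  ring

lemma rinner_rotGen_self (m n : ℝ) (u : ℂ × ℂ) :
    rinner (rotGen m n u) (rotGen m n u) = m ^ 2 * ‖u.1‖ ^ 2 + n ^ 2 * ‖u.2‖ ^ 2 := by
  simp only [rinner_self, rotGen, norm_mul, norm_I, norm_real, Real.norm_eq_abs, one_mul, mul_pow,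
    sq_abs]

lemma hasDerivAt_rpow_smul {E : Type*} [NormedAddCommGroup E] [NormedSpace ℝ E]
    (a : ℝ) (v : E) {r : ℝ} (hr : 0 < r) :
    HasDerivAt (fun s => s ^ a • v) ((a / r) • r ^ a • v) r := by
  convert (Real.hasDerivAt_rpow_const (p := a) (Or.inl hr.ne')).smul_const v using 1
  rw [smul_smul, Real.rpow_sub_one hr.ne']
  ring_nf

lemma hasDerivAt_mul_cexp (c w : ℂ) (θ : ℝ) :
    HasDerivAt (fun t : ℝ => c * exp (w * t)) (w * (c * exp (w * θ))) θ := by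
  have := ((hasDerivAt_id (θ : ℂ)).const_mul w).cexp.const_mul c |>.comp_ofReal
  simpa [mul_comm, mul_left_comm, mul_assoc] using this

lemma weaklyConformal_of_homogeneous_equivariant {a m n : ℝ} {u : ℂ × ℂ}
    (h : a ^ 2 * (‖u.1‖ ^ 2 + ‖u.2‖ ^ 2) = m ^ 2 * ‖u.1‖ ^ 2 + n ^ 2 * ‖u.2‖ ^ 2) (r : ℝ) :
    rinner ((a / r) • u) ((a / r) • u) = rinner (r⁻¹ • rotGen m n u) (r⁻¹ • rotGen m n u) ∧
      rinner ((a / r) • u) (r⁻¹ • rotGen m n u) = 0 := by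
  simp only [rinner_smul_left, rinner_smul_right, rinner_rotGen_self, rinner_rotGen_right_self,
    mul_zero, and_true]
  rw [rinner_self, ← mul_assoc, ← h]
  ring

lemma SWPhi_eq_rpow_smul (p q : ℕ) (s θ : ℝ) :
    SWPhi p q s θ = (s ^ Real.sqrt ((p : ℝ) * q)) • SWPhi p q 1 θ := by
  simp only [SWPhi, Real.one_rpow, Prod.smul_mk, real_smul]
  push_cast
  ring_nf

lemma hasDerivAt_SWPhi_radius (p q : ℕ) (θ : ℝ) {r : ℝ} (hr : 0 < r) :
    HasDerivAt (fun s => SWPhi p q s θ) ((Real.sqrt ((p : ℝ) * q) / r) • SWPhi p q r θ) r := by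
  have hΦ : (fun s => SWPhi p q s θ) = fun s => (s ^ Real.sqrt ((p : ℝ) * q)) • SWPhi p q 1 θ :=
    funext fun s => SWPhi_eq_rpow_smul p q s θ
  rw [hΦ, SWPhi_eq_rpow_smul p q r]
  exact hasDerivAt_rpow_smul _ (SWPhi p q 1 θ) hr

lemma hasDerivAt_SWPhi_angle (p q : ℕ) (r θ : ℝ) :
    HasDerivAt (fun t => SWPhi p q r t) (rotGen p (-q) (SWPhi p q r θ)) θ := by
  have h₁ := hasDerivAt_mul_cexp
    ((r ^ Real.sqrt ((p : ℝ) * q) / Real.sqrt ((p : ℝ) + q) * Real.sqrt q : ℝ) : ℂ) (I * p) θ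
  have h₂ := hasDerivAt_mul_cexp
    (((r ^ Real.sqrt ((p : ℝ) * q) / Real.sqrt ((p : ℝ) + q) * Real.sqrt p : ℝ) : ℂ) * I)
    (-(I * q)) θ
  convert h₁.prodMk h₂ using 1
  · simp only [SWPhi, neg_mul]
  · simp only [rotGen, SWPhi, neg_mul]
    push_cast
    ring_nf

lemma SWPhi_energy_balance (p q : ℕ) (r θ : ℝ) :
    (p : ℝ) * ‖(SWPhi p q r θ).1‖ ^ 2 = q * ‖(SWPhi p q r θ).2‖ ^ 2 := by
  simp [SWPhi, norm_exp, mul_pow, div_pow, mul_comm, mul_left_comm]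

theorem swcone_weakly_conformal_general (p q : ℕ)
    (r θ : ℝ) (hr : 0 < r) :
    rinner (deriv (fun s => SWPhi p q s θ) r) (deriv (fun s => SWPhi p q s θ) r) =
      rinner (r⁻¹ • deriv (fun t => SWPhi p q r t) θ)
        (r⁻¹ • deriv (fun t => SWPhi p q r t) θ) ∧
    rinner (deriv (fun s => SWPhi p q s θ) r)
      (r⁻¹ • deriv (fun t => SWPhi p q r t) θ) = 0 := by
  rw [(hasDerivAt_SWPhi_radius p q θ hr).deriv, (hasDerivAt_SWPhi_angle p q r θ).deriv]
  refine weaklyConformal_of_homogeneous_equivariant ?_ r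
  have ha : Real.sqrt ((p : ℝ) * q) ^ 2 = p * q := Real.sq_sqrt (by positivity)
  linear_combination (‖(SWPhi p q r θ).1‖ ^ 2 + ‖(SWPhi p q r θ).2‖ ^ 2) * ha +
    ((q : ℝ) - p) * SWPhi_energy_balance p q r θ

/-- `Φ_{p,q}` is weakly conformal: `|∂_r Φ|² = |(1/r)∂_θ Φ|²` and
`⟨∂_r Φ, (1/r)∂_θ Φ⟩ = 0` for all `r > 0` and `θ`. -/
theorem swcone_weakly_conformal (p q : ℕ) (hp : 0 < p) (hq : 0 < q)
    (r θ : ℝ) (hr : 0 < r) :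
    rinner (deriv (fun s => SWPhi p q s θ) r) (deriv (fun s => SWPhi p q s θ) r) =
      rinner (r⁻¹ • deriv (fun t => SWPhi p q r t) θ)
        (r⁻¹ • deriv (fun t => SWPhi p q r t) θ) ∧
    rinner (deriv (fun s => SWPhi p q s θ) r)
      (r⁻¹ • deriv (fun t => SWPhi p q r t) θ) = 0 :=
  swcone_weakly_conformal_general p q r θ hr
end

section
/- If u : D² → ℂ² is a C² weakly conformal Lagrangian map with continuous Lagrangian angle conj(g) satisfying (1/r)∂_θ u = −conj(g) J ∂_r u (where J denotes quaternionic multiplication by j under the identification ℂ² ≅ ℍ), then div(g ∇u) = 0 on D². -/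
/-- The standard symplectic form on `ℂ²`. -/
noncomputable def omegaStd (u v : ℂ × ℂ) : ℝ :=
  ((starRingEnd ℂ) u.1 * v.1).im + ((starRingEnd ℂ) u.2 * v.2).im

/-- Quaternionic multiplication by `j` under the identification `ℂ² ≅ ℍ`,
`(z, w) ↦ z + w j`:  `J(z,w) = (−conj w, conj z)`. -/
noncomputable def Jquat (v : ℂ × ℂ) : ℂ × ℂ :=
  (-(starRingEnd ℂ) v.2, (starRingEnd ℂ) v.1)

open Metric Filter Topology ComplexConjugate

lemma Jquat_smul (a : ℂ) (v : ℂ × ℂ) : Jquat (a • v) = conj a • Jquat v := by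
  simp [Jquat]

lemma Jquat_Jquat (v : ℂ × ℂ) : Jquat (Jquat v) = -v := by
  simp [Jquat, Prod.ext_iff]

lemma smul_Jquat_smul_Jquat {a : ℂ} (ha : ‖a‖ = 1) (v : ℂ × ℂ) :
    a • Jquat (a • Jquat v) = -v := by
  rw [Jquat_smul, smul_smul, Complex.mul_conj', ha, Jquat_Jquat]
  simp

noncomputable def jquatCLM : (ℂ × ℂ) →L[ℝ] ℂ × ℂ :=
  LinearMap.toContinuousLinearMap
    { toFun := Jquat
      map_add' := fun v w => by simp [Jquat, Prod.ext_iff]; ring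
      map_smul' := fun c v => by simp [Jquat, Complex.real_smul] }

@[simp] lemma jquatCLM_apply (v : ℂ × ℂ) : jquatCLM v = Jquat v := rfl

/-- For a complex structure `T`, the relation `A ∘ rot = -T ∘ A` (with `rot` the rotation by a
right angle) holds at every unit vector once it holds at one. -/
lemma LinearMap.map_rotate_eq_of_map_rotate_unit {E : Type*} [AddCommGroup E] [Module ℝ E]
    (A : ℝ × ℝ →ₗ[ℝ] E) (T : E →ₗ[ℝ] E) (hT : ∀ v, T (T v) = -v) {c s : ℝ}
    (hcs : c ^ 2 + s ^ 2 = 1) (h : A (-s, c) = -T (A (c, s))) :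
    A (0, 1) = -T (A (1, 0)) := by
  have e₁ : ((0, 1) : ℝ × ℝ) = s • (c, s) + c • (-s, c) :=
    Prod.ext (by simp; ring) (by simp; linear_combination -hcs)
  have e₂ : ((1, 0) : ℝ × ℝ) = c • (c, s) - s • (-s, c) :=
    Prod.ext (by simp; linear_combination -hcs) (by simp; ring)
  rw [e₁, e₂]
  simp only [map_add, map_sub, map_smul, h, map_neg, hT]
  module

section Polar

variable {E : Type*} [NormedAddCommGroup E] [NormedSpace ℝ E] {u : ℝ × ℝ → E} {r θ : ℝ}

lemma deriv_comp_polar_angle (hu : DifferentiableAt ℝ u (r * Real.cos θ, r * Real.sin θ)) :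
    deriv (fun t => u (r * Real.cos t, r * Real.sin t)) θ =
      r • fderiv ℝ u (r * Real.cos θ, r * Real.sin θ) (-Real.sin θ, Real.cos θ) := by
  have hcurve : HasDerivAt (fun t : ℝ => (r * Real.cos t, r * Real.sin t))
      (r • ((-Real.sin θ, Real.cos θ) : ℝ × ℝ)) θ := by
    convert ((Real.hasDerivAt_cos θ).const_mul r).prodMk ((Real.hasDerivAt_sin θ).const_mul r)
      using 1
    simp
  exact (hu.hasFDerivAt.comp_hasDerivAt θ hcurve).deriv.trans (map_smul _ _ _)

lemma deriv_comp_polar_radius (hu : DifferentiableAt ℝ u (r * Real.cos θ, r * Real.sin θ)) :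
    deriv (fun s => u (s * Real.cos θ, s * Real.sin θ)) r =
      fderiv ℝ u (r * Real.cos θ, r * Real.sin θ) (Real.cos θ, Real.sin θ) :=
  (hu.hasFDerivAt.comp_hasDerivAt r
    ((hasDerivAt_mul_const (Real.cos θ)).prodMk (hasDerivAt_mul_const (Real.sin θ)))).deriv

end Polar

def PolarStructuralRelation (u : ℝ × ℝ → ℂ × ℂ) (g : ℝ × ℝ → ℂ) : Prop :=
  ∀ r θ : ℝ, 0 < r → (r * Real.cos θ, r * Real.sin θ) ∈ ball (0 : ℝ × ℝ) 1 →
    r⁻¹ • deriv (fun t => u (r * Real.cos t, r * Real.sin t)) θ =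
      (-conj (g (r * Real.cos θ, r * Real.sin θ))) •
        Jquat (deriv (fun s => u (s * Real.cos θ, s * Real.sin θ)) r)

lemma exists_polar_of_ne_zero {p : ℝ × ℝ} (hp : p ≠ 0) :
    ∃ r θ : ℝ, 0 < r ∧ (r * Real.cos θ, r * Real.sin θ) = p := by
  set z := Complex.equivRealProd.symm p
  have hz : z ≠ 0 := by simpa [z] using Complex.equivRealProd.symm.injective.ne hp
  refine ⟨‖z‖, z.arg, norm_pos_iff.mpr hz, ?_⟩
  rw [Complex.norm_mul_cos_arg, Complex.norm_mul_sin_arg]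
  simp [z]

section StructuralRelation

variable {u : ℝ × ℝ → ℂ × ℂ} {g : ℝ × ℝ → ℂ}

lemma fderiv_snd_eq_of_polarStructuralRelation_of_ne_zero (hu : Differentiable ℝ u)
    (hg1 : ∀ v, ‖g v‖ = 1) (hstruct : PolarStructuralRelation u g) {p : ℝ × ℝ}
    (hp : p ∈ ball (0 : ℝ × ℝ) 1) (hp0 : p ≠ 0) :
    fderiv ℝ u p (0, 1) = -(conj (g p) • Jquat (fderiv ℝ u p (1, 0))) := by
  obtain ⟨r, θ, hr, rfl⟩ := exists_polar_of_ne_zero hp0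
  have hrel := hstruct r θ hr hp
  rw [deriv_comp_polar_angle (hu _), deriv_comp_polar_radius (hu _), inv_smul_smul₀ hr.ne',
    neg_smul] at hrel
  set a := conj (g (r * Real.cos θ, r * Real.sin θ))
  have ha : ‖a‖ = 1 := by simpa [a] using hg1 _
  let T : (ℂ × ℂ) →ₗ[ℝ] ℂ × ℂ := (a • jquatCLM :)
  have hT : ∀ v, T (T v) = -v := smul_Jquat_smul_Jquat ha
  have hcs : Real.cos θ ^ 2 + Real.sin θ ^ 2 = 1 := Real.cos_sq_add_sin_sq θ
  exact (fderiv ℝ u _).toLinearMap.map_rotate_eq_of_map_rotate_unit T hT hcs hrel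

lemma fderiv_snd_eq_of_polarStructuralRelation (hu : ContDiff ℝ 1 u) (hg : Continuous g)
    (hg1 : ∀ v, ‖g v‖ = 1) (hstruct : PolarStructuralRelation u g) {p : ℝ × ℝ}
    (hp : p ∈ ball (0 : ℝ × ℝ) 1) :
    fderiv ℝ u p (0, 1) = -(conj (g p) • Jquat (fderiv ℝ u p (1, 0))) := by
  have hne := fun q (hq : q ∈ ball (0 : ℝ × ℝ) 1) (hq0 : q ≠ 0) =>
    fderiv_snd_eq_of_polarStructuralRelation_of_ne_zero (hu.differentiable one_ne_zero) hg1
      hstruct hq hq0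
  rcases eq_or_ne p 0 with rfl | hp0
  · have hDu := hu.continuous_fderiv one_ne_zero
    have hpunct : (fun q => fderiv ℝ u q (0, 1))
        =ᶠ[𝓝[≠] 0] fun q => -(conj (g q) • jquatCLM (fderiv ℝ u q (1, 0))) := by
      filter_upwards [nhdsWithin_le_nhds (ball_mem_nhds (0 : ℝ × ℝ) one_pos),
        self_mem_nhdsWithin] with q hq hq0 using hne q hq hq0
    exact ((ContinuousAt.eventuallyEq_nhds_iff_eventuallyEq_nhdsNE (by fun_prop)
      (by fun_prop)).mp hpunct).eq_of_nhds
  · exact hne p hp hp0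

end StructuralRelation

lemma fderiv_clm_comp_fderiv_apply {E F G : Type*} [NormedAddCommGroup E] [NormedSpace ℝ E]
    [NormedAddCommGroup F] [NormedSpace ℝ F] [NormedAddCommGroup G] [NormedSpace ℝ G]
    {f : E → F} (hf : ContDiff ℝ 2 f) (L : F →L[ℝ] G) (x e e' : E) :
    fderiv ℝ (fun w => L (fderiv ℝ f w e)) x e' = L (fderiv ℝ (fderiv ℝ f) x e' e) := by
  have hDf : Differentiable ℝ (fderiv ℝ f) :=
    (hf.fderiv_right (m := 1) (by norm_num)).differentiable one_ne_zero
  have hcomp : HasFDerivAt (fun w => L (fderiv ℝ f w e))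
      ((L.comp (ContinuousLinearMap.apply ℝ F e)).comp (fderiv ℝ (fderiv ℝ f) x)) x :=
    (L.comp (ContinuousLinearMap.apply ℝ F e)).hasFDerivAt.comp x (hDf x).hasFDerivAt
  exact DFunLike.congr_fun hcomp.fderiv e'

theorem structural_equation_general (u : ℝ × ℝ → ℂ × ℂ) (g : ℝ × ℝ → ℂ)
    (hu : ContDiff ℝ 2 u) (hg : Continuous g) (hg1 : ∀ v, ‖g v‖ = 1)
    (hstruct : ∀ r θ : ℝ, 0 < r → (r * Real.cos θ, r * Real.sin θ) ∈ Metric.ball (0 : ℝ × ℝ) 1 →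
      r⁻¹ • deriv (fun t => u (r * Real.cos t, r * Real.sin t)) θ =
        (-(starRingEnd ℂ) (g (r * Real.cos θ, r * Real.sin θ))) •
          Jquat (deriv (fun s => u (s * Real.cos θ, s * Real.sin θ)) r)) :
    ∀ v ∈ Metric.ball (0 : ℝ × ℝ) 1,
      fderiv ℝ (fun w => g w • fderiv ℝ u w (1, 0)) v (1, 0) +
        fderiv ℝ (fun w => g w • fderiv ℝ u w (0, 1)) v (0, 1) = 0 := by
  intro v hv
  have hrel : ∀ p ∈ ball (0 : ℝ × ℝ) 1,
      fderiv ℝ u p (0, 1) = -(conj (g p) • Jquat (fderiv ℝ u p (1, 0))) := fun p hp =>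
    fderiv_snd_eq_of_polarStructuralRelation (hu.of_le (by norm_num)) hg hg1 hstruct hp
  have hx : (fun w => g w • fderiv ℝ u w (1, 0)) =ᶠ[𝓝 v]
      fun w => jquatCLM (fderiv ℝ u w (0, 1)) := by
    filter_upwards [isOpen_ball.mem_nhds hv] with w hw
    rw [jquatCLM_apply, hrel w hw, ← neg_smul, Jquat_smul, Jquat_Jquat]
    simp
  have hy : (fun w => g w • fderiv ℝ u w (0, 1)) =ᶠ[𝓝 v]
      fun w => (-jquatCLM) (fderiv ℝ u w (1, 0)) := by
    filter_upwards [isOpen_ball.mem_nhds hv] with w hw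
    rw [hrel w hw, smul_neg, smul_smul, Complex.mul_conj', hg1]
    simp
  have hsymm := hu.contDiffAt.isSymmSndFDerivAt (x := v)
    (by simp [minSmoothness_of_isRCLikeNormedField]) (1, 0) (0, 1)
  rw [hx.fderiv_eq, hy.fderiv_eq, fderiv_clm_comp_fderiv_apply hu,
    fderiv_clm_comp_fderiv_apply hu, hsymm]
  simp

/-- If `u : D² → ℂ²` is a `C²` weakly conformal Lagrangian map with continuous
Lagrangian angle `conj(g)` satisfying `(1/r)∂_θ u = −conj(g) J ∂_r u`, then
`div(g ∇u) = 0` on `D²`. -/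
theorem structural_equation (u : ℝ × ℝ → ℂ × ℂ) (g : ℝ × ℝ → ℂ)
    (hu : ContDiff ℝ 2 u) (hg : Continuous g) (hg1 : ∀ v, ‖g v‖ = 1)
    (hconf₁ : ∀ v, rinner (fderiv ℝ u v (1, 0)) (fderiv ℝ u v (0, 1)) = 0)
    (hconf₂ : ∀ v, rinner (fderiv ℝ u v (1, 0)) (fderiv ℝ u v (1, 0)) =
      rinner (fderiv ℝ u v (0, 1)) (fderiv ℝ u v (0, 1)))
    (hlag : ∀ v, omegaStd (fderiv ℝ u v (1, 0)) (fderiv ℝ u v (0, 1)) = 0)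
    (hstruct : ∀ r θ : ℝ, 0 < r → (r * Real.cos θ, r * Real.sin θ) ∈ Metric.ball (0 : ℝ × ℝ) 1 →
      r⁻¹ • deriv (fun t => u (r * Real.cos t, r * Real.sin t)) θ =
        (-(starRingEnd ℂ) (g (r * Real.cos θ, r * Real.sin θ))) •
          Jquat (deriv (fun s => u (s * Real.cos θ, s * Real.sin θ)) r)) :
    ∀ v ∈ Metric.ball (0 : ℝ × ℝ) 1,
      fderiv ℝ (fun w => g w • fderiv ℝ u w (1, 0)) v (1, 0) +
        fderiv ℝ (fun w => g w • fderiv ℝ u w (0, 1)) v (0, 1) = 0 :=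
  structural_equation_general u g hu hg hg1 hstruct
end

section
/- With g = e^{ix} and G = y on the unit disc, the map u = (conj(g), iG) : closure(D²) → ℂ² satisfies div(g ∇u) = 0 componentwise, is smooth, conformal (⟨∂_x u, ∂_y u⟩ = 0, |∂_x u| = |∂_y u| = 1) and Lagrangian (ω(∂_x u, ∂_y u) = 0), and is an embedding; its Lagrangian angle conj(g) = e^{−ix} is non-constant, so u is not harmonic (Δu ≠ 0). -/
/-- `g(x,y) = e^{ix}`. -/
noncomputable def gEx (v : ℝ × ℝ) : ℂ := Complex.exp (Complex.I * v.1)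

/-- `u(x,y) = (e^{−ix}, iy) = (conj g, iG)` with `G = y`. -/
noncomputable def uEx (v : ℝ × ℝ) : ℂ × ℂ :=
  (Complex.exp (-(Complex.I * v.1)), Complex.I * v.2)

open Complex

noncomputable def phiX : (ℝ × ℝ) →L[ℝ] ℂ :=
  Complex.ofRealCLM.comp (ContinuousLinearMap.fst ℝ ℝ ℝ)
noncomputable def psiY : (ℝ × ℝ) →L[ℝ] ℂ :=
  Complex.ofRealCLM.comp (ContinuousLinearMap.snd ℝ ℝ ℝ)

@[simp] lemma phiX_apply (v : ℝ × ℝ) : phiX v = (v.1 : ℂ) := rfl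
@[simp] lemma psiY_apply (v : ℝ × ℝ) : psiY v = (v.2 : ℂ) := rfl

lemma hasFDerivAt_cexp (c : ℂ) (v : ℝ × ℝ) :
    HasFDerivAt (fun w : ℝ × ℝ => Complex.exp (c * w.1))
      ((c * Complex.exp (c * (v.1 : ℂ))) • phiX) v := by
  have h1 : HasFDerivAt (fun w : ℝ × ℝ => c * (w.1 : ℂ)) (c • phiX) v := by
    simpa using (phiX.hasFDerivAt (x := v)).const_mul c
  have h2 := ((Complex.hasDerivAt_exp (c * (v.1 : ℂ))).hasFDerivAt).restrictScalars ℝ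
  have h3 := h2.comp v h1
  refine h3.congr_fderiv ?_
  refine ContinuousLinearMap.ext fun u => ?_
  simp [mul_comm, mul_assoc, mul_left_comm]

lemma hasFDerivAt_uEx (v : ℝ × ℝ) :
    HasFDerivAt uEx
      ((((-Complex.I) * Complex.exp ((-Complex.I) * (v.1 : ℂ))) • phiX).prod
        (Complex.I • psiY)) v := by
  have h1 := hasFDerivAt_cexp (-Complex.I) v
  have h2 : HasFDerivAt (fun w : ℝ × ℝ => Complex.I * (w.2 : ℂ)) (Complex.I • psiY) v := by
    simpa using (psiY.hasFDerivAt (x := v)).const_mul Complex.I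
  have h3 := h1.prodMk h2
  have : uEx = fun w : ℝ × ℝ => (Complex.exp ((-Complex.I) * (w.1 : ℂ)), Complex.I * (w.2 : ℂ)) := by
    funext w; simp [uEx, neg_mul]
  rw [this]; exact h3

lemma fderiv_uEx_apply (v : ℝ × ℝ) (a b : ℝ) :
    fderiv ℝ uEx v (a, b) =
      ((-Complex.I) * Complex.exp ((-Complex.I) * (v.1 : ℂ)) * a, Complex.I * b) := by
  rw [(hasFDerivAt_uEx v).fderiv]
  simp [mul_comm, mul_assoc, mul_left_comm]

lemma exp_mul_exp_neg (z : ℂ) : Complex.exp z * Complex.exp (-z) = 1 := by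
  rw [← Complex.exp_add]; simp

lemma fun1_eq : (fun w : ℝ × ℝ => gEx w • fderiv ℝ uEx w ((1 : ℝ), (0 : ℝ))) =
    fun _ => ((-Complex.I, 0) : ℂ × ℂ) := by
  funext w
  rw [fderiv_uEx_apply]
  have h := exp_mul_exp_neg (Complex.I * (w.1 : ℂ))
  simp only [gEx, Prod.smul_mk, smul_eq_mul, Complex.ofReal_one, mul_one,
    Complex.ofReal_zero, mul_zero, neg_mul]
  refine Prod.ext ?_ rfl
  show _ = -Complex.I
  linear_combination (-Complex.I) * h

lemma fun2_eq : (fun w : ℝ × ℝ => gEx w • fderiv ℝ uEx w ((0 : ℝ), (1 : ℝ))) =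
    fun w : ℝ × ℝ => ((0 : ℂ), Complex.exp (Complex.I * (w.1 : ℂ)) * Complex.I) := by
  funext w
  rw [fderiv_uEx_apply]
  simp [gEx]

lemma part1 (v : ℝ × ℝ) :
    fderiv ℝ (fun w => gEx w • fderiv ℝ uEx w ((1:ℝ), (0:ℝ))) v ((1:ℝ), (0:ℝ)) +
      fderiv ℝ (fun w => gEx w • fderiv ℝ uEx w ((0:ℝ), (1:ℝ))) v ((0:ℝ), (1:ℝ)) = 0 := by
  rw [fun1_eq, fun2_eq]
  have h2 : HasFDerivAt (fun w : ℝ × ℝ => ((0 : ℂ), Complex.exp (Complex.I * (w.1 : ℂ)) * Complex.I))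
      (((0 : (ℝ × ℝ) →L[ℝ] ℂ)).prod
        (Complex.I • ((Complex.I * Complex.exp (Complex.I * (v.1 : ℂ))) • phiX))) v := by
    exact (hasFDerivAt_const _ _).prodMk ((hasFDerivAt_cexp Complex.I v).mul_const Complex.I)
  rw [fderiv_fun_const, h2.fderiv]
  simp

lemma contDiff_uEx : ContDiff ℝ (⊤ : ℕ∞) uEx := by
  have h1 : ContDiff ℝ (⊤ : ℕ∞) (fun w : ℝ × ℝ => ((w.1 : ℂ))) :=
    Complex.ofRealCLM.contDiff.comp contDiff_fst
  have h2 : ContDiff ℝ (⊤ : ℕ∞) (fun w : ℝ × ℝ => ((w.2 : ℂ))) :=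
    Complex.ofRealCLM.contDiff.comp contDiff_snd
  exact (Complex.contDiff_exp.comp ((h1.const_smul Complex.I).neg)).prodMk
    (h2.const_smul Complex.I)

lemma part3 (v : ℝ × ℝ) :
    rinner (fderiv ℝ uEx v (1, 0)) (fderiv ℝ uEx v (0, 1)) = 0 ∧
      rinner (fderiv ℝ uEx v (1, 0)) (fderiv ℝ uEx v (1, 0)) = 1 ∧
      rinner (fderiv ℝ uEx v (0, 1)) (fderiv ℝ uEx v (0, 1)) = 1 := by
  rw [fderiv_uEx_apply, fderiv_uEx_apply]
  have habs : Complex.normSq (Complex.exp (-(Complex.I * (v.1 : ℂ)))) = 1 := by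
    rw [Complex.normSq_eq_norm_sq, Complex.norm_exp]
    simp
  refine ⟨by simp [rinner], ?_, by simp [rinner]⟩
  simp only [rinner, Complex.ofReal_one, mul_one, Complex.ofReal_zero, mul_zero,
    Complex.mul_conj]
  simp [habs]

lemma part4 (v : ℝ × ℝ) :
    omegaStd (fderiv ℝ uEx v (1, 0)) (fderiv ℝ uEx v (0, 1)) = 0 := by
  rw [fderiv_uEx_apply, fderiv_uEx_apply]
  simp [omegaStd]

lemma part5 : Set.InjOn uEx (closure (Metric.ball (0 : ℝ × ℝ) 1)) := by
  intro v hv w hw h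
  rw [closure_ball (0 : ℝ × ℝ) one_ne_zero] at hv hw
  rw [Metric.mem_closedBall, dist_zero_right] at hv hw
  have hv1 : |v.1| ≤ 1 := le_trans (norm_fst_le v) hv
  have hw1 : |w.1| ≤ 1 := le_trans (norm_fst_le w) hw
  have h1 : Complex.exp (-(Complex.I * v.1)) = Complex.exp (-(Complex.I * w.1)) :=
    congrArg Prod.fst h
  have h2 : Complex.I * (v.2 : ℂ) = Complex.I * w.2 := congrArg Prod.snd h
  have hy : v.2 = w.2 := by
    have := mul_left_cancel₀ Complex.I_ne_zero h2
    exact_mod_cast this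
  rw [Complex.exp_eq_exp_iff_exists_int] at h1
  obtain ⟨n, hn⟩ := h1
  have him := congrArg Complex.im hn
  simp [Complex.add_im, Complex.mul_im] at him
  have hx : v.1 = w.1 := by
    by_contra hne
    have hn0 : n ≠ 0 := by
      rintro rfl
      simp at him
      exact hne (by linarith [him])
    have h1n : (1 : ℝ) ≤ |(n : ℝ)| := by
      have : (1 : ℤ) ≤ |n| := Int.one_le_abs hn0
      exact_mod_cast this
    have hpi := Real.pi_gt_three
    have : |(-v.1 : ℝ) - (-w.1)| = |(n : ℝ)| * (2 * Real.pi) := by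
      rw [him]
      have : -w.1 + ↑n * (2 * Real.pi) - -w.1 = ↑n * (2 * Real.pi) := by ring
      rw [this, abs_mul, abs_of_pos (by positivity : (0:ℝ) < 2 * Real.pi)]
    have hle : |(-v.1 : ℝ) - (-w.1)| ≤ 2 := by
      rw [abs_sub_le_iff]; constructor <;> cases abs_le.1 hv1 <;> cases abs_le.1 hw1 <;> linarith
    nlinarith [abs_nonneg ((n:ℝ))]
  exact Prod.ext hx hy

lemma dfun1_eq : (fun w : ℝ × ℝ => fderiv ℝ uEx w ((1:ℝ), (0:ℝ))) =
    fun w : ℝ × ℝ => (((-Complex.I) * Complex.exp ((-Complex.I) * (w.1 : ℂ)), 0) : ℂ × ℂ) := by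
  funext w; rw [fderiv_uEx_apply]; simp

lemma dfun2_eq : (fun w : ℝ × ℝ => fderiv ℝ uEx w ((0:ℝ), (1:ℝ))) =
    fun _ : ℝ × ℝ => ((0, Complex.I) : ℂ × ℂ) := by
  funext w; rw [fderiv_uEx_apply]; simp

lemma part6 : ¬ ∀ v ∈ Metric.ball (0 : ℝ × ℝ) 1,
    fderiv ℝ (fun w => fderiv ℝ uEx w ((1:ℝ), (0:ℝ))) v ((1:ℝ), (0:ℝ)) +
      fderiv ℝ (fun w => fderiv ℝ uEx w ((0:ℝ), (1:ℝ))) v ((0:ℝ), (1:ℝ)) = 0 := by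
  intro hall
  have h0 := hall 0 (by simp)
  rw [dfun1_eq, dfun2_eq] at h0
  have hd : HasFDerivAt
      (fun w : ℝ × ℝ => (((-Complex.I) * Complex.exp ((-Complex.I) * (w.1 : ℂ)), 0) : ℂ × ℂ))
      ((((-Complex.I) • (((-Complex.I) * Complex.exp ((-Complex.I) * ((0:ℝ×ℝ).1 : ℂ))) • phiX))).prod
        (0 : (ℝ × ℝ) →L[ℝ] ℂ)) 0 := by
    exact ((hasFDerivAt_cexp (-Complex.I) 0).const_mul (-Complex.I)).prodMk (hasFDerivAt_const _ _)
  rw [hd.fderiv, fderiv_fun_const] at h0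
  simp [Prod.ext_iff, Complex.ext_iff] at h0

/-- The map `u = (conj g, iG)` is a smooth, conformal, Lagrangian embedding of the closed
disc satisfying `div(g ∇u) = 0` (it is Hamiltonian stationary), but its Lagrangian angle
`conj g = e^{−ix}` is non-constant and `u` is not harmonic. -/
theorem example_HSL_not_minimal :
    (∀ v : ℝ × ℝ,
      fderiv ℝ (fun w => gEx w • fderiv ℝ uEx w (1, 0)) v (1, 0) +
        fderiv ℝ (fun w => gEx w • fderiv ℝ uEx w (0, 1)) v (0, 1) = 0) ∧
    ContDiff ℝ (⊤ : ℕ∞) uEx ∧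
    (∀ v : ℝ × ℝ, rinner (fderiv ℝ uEx v (1, 0)) (fderiv ℝ uEx v (0, 1)) = 0 ∧
      rinner (fderiv ℝ uEx v (1, 0)) (fderiv ℝ uEx v (1, 0)) = 1 ∧
      rinner (fderiv ℝ uEx v (0, 1)) (fderiv ℝ uEx v (0, 1)) = 1) ∧
    (∀ v : ℝ × ℝ, omegaStd (fderiv ℝ uEx v (1, 0)) (fderiv ℝ uEx v (0, 1)) = 0) ∧
    Set.InjOn uEx (closure (Metric.ball (0 : ℝ × ℝ) 1)) ∧
    (¬ ∀ v ∈ Metric.ball (0 : ℝ × ℝ) 1,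
      fderiv ℝ (fun w => fderiv ℝ uEx w (1, 0)) v (1, 0) +
        fderiv ℝ (fun w => fderiv ℝ uEx w (0, 1)) v (0, 1) = 0) :=
  ⟨part1, contDiff_uEx, part3, part4, part5, part6⟩
end
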